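/- arXiv:2308.09846 — 2 statements merged into one kernel-verified Lean document; each statement's English description precedes it below -/
import Mathlib

section
/- Let L, S ∈ ℕ and let A be a nonempty subset of 2^{-LS}ℤ^d ∩ [0,1)^d. Then there exists an (L,S)-uniform subset A' ⊆ A with |A'| ≥ (2Ld)^{-S} |A|. -/
open Set Metric Pointwise

noncomputable section

/-- The half-open dyadic cube of side `2^{-k}` indexed by `j ∈ ℤ^d`. -/
def dyadicCube (d k : ℕ) (j : Fin d → ℤ) : Set (EuclideanSpace ℝ (Fin d)) :=
  {x | ∀ i, (j i : ℝ) ≤ 2 ^ k * x i ∧ 2 ^ k * x i < j i + 1}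

/-- Indices of dyadic cubes of side `2^{-k}` meeting `A`. -/
def covIdx (d k : ℕ) (A : Set (EuclideanSpace ℝ (Fin d))) : Set (Fin d → ℤ) :=
  {j | (A ∩ dyadicCube d k j).Nonempty}

/-- The dyadic covering number `|A|_{2^{-k}}`. -/
def covNum (d k : ℕ) (A : Set (EuclideanSpace ℝ (Fin d))) : ℕ :=
  (covIdx d k A).ncard

/-- The unit cube `[0,1)^d`. -/
def unitCube (d : ℕ) : Set (EuclideanSpace ℝ (Fin d)) := {x | ∀ i, 0 ≤ x i ∧ x i < 1}

/-- A `2^{-m}`-set : a subset of `2^{-m}ℤ^d ∩ [0,1)^d`. -/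
def IsDyadicSet (d m : ℕ) (A : Set (EuclideanSpace ℝ (Fin d))) : Prop :=
  A ⊆ unitCube d ∧ ∀ x ∈ A, ∀ i, ∃ n : ℤ, x i = n / 2 ^ m

/-- `(L,S)`-uniformity with branching numbers `R s`. -/
def IsUniform (d L S : ℕ) (R : ℕ → ℕ) (A : Set (EuclideanSpace ℝ (Fin d))) : Prop :=
  ∀ s < S, ∀ j ∈ covIdx d (s * L) A,
    covNum d ((s + 1) * L) (A ∩ dyadicCube d (s * L) j) = R s

/-- The homothety mapping the dyadic cube of level `k` with index `j` onto `[0,1)^d`. -/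
def renorm (d k : ℕ) (j : Fin d → ℤ) (y : EuclideanSpace ℝ (Fin d)) :
    EuclideanSpace ℝ (Fin d) := WithLp.toLp 2 (fun i => 2 ^ k * y i - j i)

/-- The `2^{-L}`-set associated to a set `B ⊆ [0,1)^d`: representatives `j/2^L` of
dyadic cubes of side `2^{-L}` meeting `B`. -/
def discretize (d L : ℕ) (B : Set (EuclideanSpace ℝ (Fin d))) :
    Set (EuclideanSpace ℝ (Fin d)) :=
  {x | ∃ j ∈ covIdx d L B, x = fun i => (j i : ℝ) / 2 ^ L}

/-!
The uniform subset is obtained by pruning one scale at a time, from the finest to the coarsest.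
At scale `s` every cube of level `sL` has between `1` and `2^{Ld}` children of level `(s+1)L`.
Sorting the cubes into `Ld` classes by the dyadic range `[2^t, 2^{t+1}]` of their number of
children and keeping the most populated class costs a factor `Ld`; keeping in each surviving
cube only its `2^t` most populated children costs another factor `2`. Children are kept or
discarded whole, so the uniformity already achieved at the finer scales is not destroyed.
-/

section Branching

open Finset

variable {α β γ : Type*}

def IsSaturated (f : α → β) (B' B : Finset α) : Prop :=
  ∀ x ∈ B, ∀ y ∈ B', f x = f y → x ∈ B'

theorem IsSaturated.trans {f : α → β} {C B' B : Finset α} (h₁ : IsSaturated f C B')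
    (h₂ : IsSaturated f B' B) (hC : C ⊆ B') : IsSaturated f C B :=
  fun x hx y hy hxy => h₁ x (h₂ x hx y (hC hy) hxy) y hy hxy

theorem IsSaturated.of_refines {f : α → β} {g : α → γ} {B' B : Finset α}
    (h : IsSaturated f B' B) (hgf : ∀ ⦃x y⦄, g x = g y → f x = f y) : IsSaturated g B' B :=
  fun x hx y hy hxy => h x hx y hy (hgf hxy)

variable [DecidableEq β] [DecidableEq γ]

def numChildren (p : α → β) (c : α → γ) (B : Finset α) (b : β) : ℕ :=
  #({x ∈ B | p x = b}.image c)

theorem numChildren_mono {p : α → β} {c : α → γ} {B' B : Finset α} (h : B' ⊆ B) (b : β) :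
    numChildren p c B' b ≤ numChildren p c B b :=
  card_le_card (image_subset_image (filter_subset_filter _ h))

theorem one_le_numChildren {p : α → β} {c : α → γ} {B : Finset α} {x : α} (hx : x ∈ B) :
    1 ≤ numChildren p c B (p x) :=
  card_pos.mpr ⟨c x, mem_image_of_mem c (mem_filter.mpr ⟨hx, rfl⟩)⟩

theorem IsSaturated.numChildren_eq {p : α → β} {c : α → γ} {B' B : Finset α}
    (h : IsSaturated p B' B) (hB : B' ⊆ B) {y : α} (hy : y ∈ B') :
    numChildren p c B' (p y) = numChildren p c B (p y) := by
  have : {x ∈ B' | p x = p y} = {x ∈ B | p x = p y} :=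
    (filter_subset_filter _ hB).antisymm fun x hx =>
      mem_filter.mpr ⟨h x (mem_filter.mp hx).1 y hy (mem_filter.mp hx).2, (mem_filter.mp hx).2⟩
  rw [numChildren, numChildren, this]

theorem exists_subset_card_eq_mul_sum_le (w : γ → ℕ) {C : Finset γ} {m : ℕ} (hm : m ≤ #C) :
    ∃ K ⊆ C, #K = m ∧ m * ∑ i ∈ C, w i ≤ #C * ∑ i ∈ K, w i := by
  induction hC : #C generalizing C with
  | zero => exact ⟨∅, empty_subset C, by simp_all, by simp_all⟩
  | succ n ih =>
    rw [hC] at hm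
    obtain rfl | hm := hm.eq_or_lt
    · exact ⟨C, Finset.Subset.rfl, hC, le_rfl⟩
    obtain rfl | hm0 := m.eq_zero_or_pos
    · exact ⟨∅, empty_subset C, rfl, by simp⟩
    -- removing a lightest element of `C` does not decrease the average weight
    obtain ⟨a, ha, hmin⟩ := C.exists_min_image w (card_pos.mp (by omega))
    obtain ⟨K, hKC, hK, hsum⟩ := ih (C := C.erase a) (by rw [card_erase_of_mem ha]; omega)
      (by rw [card_erase_of_mem ha, hC]; rfl)
    refine ⟨K, hKC.trans (erase_subset a C), hK, ?_⟩
    have hwa : (n + 1) * w a ≤ ∑ i ∈ C, w i := by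
      simpa [hC] using card_nsmul_le_sum C w (w a) hmin
    have herase : n * ∑ i ∈ C, w i ≤ (n + 1) * ∑ i ∈ C.erase a, w i := by
      nlinarith [sum_erase_add C w ha]
    refine Nat.le_of_mul_le_mul_left ?_ (show 0 < n by omega)
    calc n * (m * ∑ i ∈ C, w i) = m * (n * ∑ i ∈ C, w i) := by ring
      _ ≤ m * ((n + 1) * ∑ i ∈ C.erase a, w i) := by gcongr
      _ = (n + 1) * (m * ∑ i ∈ C.erase a, w i) := by ring
      _ ≤ (n + 1) * (n * ∑ i ∈ K, w i) := by gcongr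
      _ = n * ((n + 1) * ∑ i ∈ K, w i) := by ring

theorem exists_subset_image_card_eq_mul_card_le (c : α → γ) {X : Finset α} {m : ℕ}
    (hm : m ≤ #(X.image c)) :
    ∃ K ⊆ X.image c, #K = m ∧ m * #X ≤ #(X.image c) * #{x ∈ X | c x ∈ K} := by
  obtain ⟨K, hK, hcard, hsum⟩ :=
    exists_subset_card_eq_mul_sum_le (fun i => #{x ∈ X | c x = i}) hm
  refine ⟨K, hK, hcard, ?_⟩
  rwa [← card_eq_sum_card_image, sum_card_fiberwise_eq_card_filter] at hsum

theorem exists_saturated_numChildren_eq_pow {p : α → β} {c : α → γ}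
    (hpc : ∀ ⦃x y⦄, c x = c y → p x = p y) {B : Finset α} {t : ℕ}
    (hB : ∀ x ∈ B, 2 ^ t ≤ numChildren p c B (p x) ∧ numChildren p c B (p x) ≤ 2 ^ (t + 1)) :
    ∃ B' ⊆ B, IsSaturated c B' B ∧ (∀ x ∈ B', numChildren p c B' (p x) = 2 ^ t) ∧
      #B ≤ 2 * #B' := by
  have hsel : ∀ b ∈ B.image p, ∃ K ⊆ {x ∈ B | p x = b}.image c, #K = 2 ^ t ∧
      #{x ∈ B | p x = b} ≤ 2 * #{x ∈ B | p x = b ∧ c x ∈ K} := by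
    intro b hb
    obtain ⟨x, hx, rfl⟩ := mem_image.mp hb
    obtain ⟨K, hK, hcard, hmul⟩ := exists_subset_image_card_eq_mul_card_le c (hB x hx).1
    refine ⟨K, hK, hcard, Nat.le_of_mul_le_mul_left ?_ (pow_pos two_pos t)⟩
    rw [filter_filter] at hmul
    calc 2 ^ t * #{y ∈ B | p y = p x} ≤ numChildren p c B (p x) * _ := hmul
      _ ≤ 2 ^ (t + 1) * _ := Nat.mul_le_mul_right _ (hB x hx).2
      _ = 2 ^ t * (2 * _) := by ring
  choose! K hKsub hKcard hKmul using hsel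
  refine ⟨{x ∈ B | c x ∈ K (p x)}, filter_subset _ _, ?_, ?_, ?_⟩
  · intro x hx y hy hxy
    exact mem_filter.mpr ⟨hx, hpc hxy ▸ hxy ▸ (mem_filter.mp hy).2⟩
  · intro x hx
    have hpx : p x ∈ B.image p := mem_image_of_mem p (mem_filter.mp hx).1
    have hchildren : {y ∈ {y ∈ B | c y ∈ K (p y)} | p y = p x}.image c = K (p x) := by
      ext k
      simp only [Finset.mem_image, mem_filter]
      constructor
      · rintro ⟨y, ⟨⟨-, hy⟩, hyx⟩, rfl⟩
        exact hyx ▸ hy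
      · intro hk
        obtain ⟨y, hy, rfl⟩ := mem_image.mp (hKsub _ hpx hk)
        obtain ⟨hyB, hyx⟩ := mem_filter.mp hy
        exact ⟨y, ⟨⟨hyB, hyx ▸ hk⟩, hyx⟩, rfl⟩
    rw [numChildren, hchildren, hKcard _ hpx]
  · calc #B = ∑ b ∈ B.image p, #{x ∈ B | p x = b} := card_eq_sum_card_image p B
      _ ≤ ∑ b ∈ B.image p, 2 * #{x ∈ B | p x = b ∧ c x ∈ K b} := sum_le_sum hKmul
      _ = 2 * #{x ∈ B | c x ∈ K (p x)} := by
        rw [← mul_sum, card_eq_sum_card_fiberwise fun x hx =>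
          mem_image_of_mem p (mem_filter.mp hx).1]
        refine congrArg _ (sum_congr rfl fun b _ => congrArg card ?_)
        rw [filter_filter]
        exact filter_congr fun x _ => ⟨fun ⟨hb, hK⟩ => ⟨hb ▸ hK, hb⟩, fun ⟨hK, hb⟩ => ⟨hb, hb ▸ hK⟩⟩

theorem exists_lt_pow_le_le_pow_succ {N n : ℕ} (hn : 0 < n) (h₁ : 1 ≤ N) (h₂ : N ≤ 2 ^ n) :
    ∃ t < n, 2 ^ t ≤ N ∧ N ≤ 2 ^ (t + 1) := by
  induction n, hn using Nat.le_induction with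
  | base => exact ⟨0, one_pos, by simpa using h₁, by simpa using h₂⟩
  | succ n hn ih =>
    by_cases h : N ≤ 2 ^ n
    · obtain ⟨t, ht, hN⟩ := ih h
      exact ⟨t, ht.trans (lt_add_one n), hN⟩
    · exact ⟨n, lt_add_one n, (not_le.mp h).le, h₂⟩

theorem exists_saturated_numChildren_eq {p : α → β} {c : α → γ}
    (hpc : ∀ ⦃x y⦄, c x = c y → p x = p y) {n : ℕ} (hn : 0 < n) {B : Finset α}
    (hB : ∀ b, numChildren p c B b ≤ 2 ^ n) :
    ∃ B' ⊆ B, IsSaturated c B' B ∧ ∃ t, (∀ x ∈ B', numChildren p c B' (p x) = 2 ^ t) ∧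
      #B ≤ 2 * n * #B' := by
  have hclass : ∀ b ∈ B.image p, ∃ t < n,
      2 ^ t ≤ numChildren p c B b ∧ numChildren p c B b ≤ 2 ^ (t + 1) := by
    intro b hb
    obtain ⟨x, hx, rfl⟩ := Finset.mem_image.mp hb
    exact exists_lt_pow_le_le_pow_succ hn (one_le_numChildren hx) (hB _)
  choose! κ hκn hκ using hclass
  obtain ⟨t, -, ht⟩ := exists_max_image (range n) (fun t => #{x ∈ B | κ (p x) = t})
    (nonempty_range_iff.mpr hn.ne')
  set Bt := {x ∈ B | κ (p x) = t}
  have hBt : #B ≤ n * #Bt := by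
    simpa [mul_comm] using card_le_mul_card_image_of_maps_to
      (fun x hx => mem_range.mpr (hκn _ (mem_image_of_mem p hx))) _ ht
  have hsat : IsSaturated p Bt B := fun x hx y hy hxy =>
    mem_filter.mpr ⟨hx, hxy ▸ (mem_filter.mp hy).2⟩
  obtain ⟨B', hB't, hsat', hunif, hcard⟩ :=
    exists_saturated_numChildren_eq_pow hpc (B := Bt) (t := t) fun x hx => by
      rw [hsat.numChildren_eq (filter_subset _ _) hx, ← (mem_filter.mp hx).2]
      exact hκ _ (mem_image_of_mem p (filter_subset _ _ hx))
  refine ⟨B', hB't.trans (filter_subset _ _), hsat'.trans (hsat.of_refines hpc) hB't, t, hunif, ?_⟩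
  calc #B ≤ n * #Bt := hBt
    _ ≤ n * (2 * #B') := Nat.mul_le_mul_left n hcard
    _ = 2 * n * #B' := by ring

theorem exists_uniform_subset_of_refines {ι : Type*} [DecidableEq ι] (φ : ℕ → α → ι)
    (hφ : ∀ ⦃s s'⦄, s ≤ s' → ∀ ⦃x y⦄, φ s' x = φ s' y → φ s x = φ s y) {n : ℕ} (hn : 0 < n)
    (S : ℕ) (B : Finset α) (hB : ∀ s < S, ∀ i, numChildren (φ s) (φ (s + 1)) B i ≤ 2 ^ n) :
    ∃ B' ⊆ B, ∃ R : ℕ → ℕ,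
      (∀ s < S, ∀ x ∈ B', numChildren (φ s) (φ (s + 1)) B' (φ s x) = R s) ∧
      #B ≤ (2 * n) ^ S * #B' := by
  induction S generalizing φ B with
  | zero => exact ⟨B, Finset.Subset.rfl, 0, by simp, by simp⟩
  | succ S ih =>
    obtain ⟨B₁, hB₁, R, hR, hcard₁⟩ := ih (fun s => φ (s + 1))
      (fun s s' h => hφ (Nat.succ_le_succ h)) B fun s hs => hB (s + 1) (by omega)
    obtain ⟨B₂, hB₂, hsat, t, ht, hcard₂⟩ := exists_saturated_numChildren_eq (hφ zero_le_one) hn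
      fun i => (numChildren_mono hB₁ i).trans (hB 0 S.succ_pos i)
    refine ⟨B₂, hB₂.trans hB₁, fun | 0 => 2 ^ t | s + 1 => R s, ?_, ?_⟩
    · rintro (_ | s) hs x hx
      · exact ht x hx
      · rw [(hsat.of_refines (hφ (Nat.succ_le_succ s.zero_le))).numChildren_eq hB₂ hx]
        exact hR s (by omega) x (hB₂ hx)
    · calc #B ≤ (2 * n) ^ S * #B₁ := hcard₁
        _ ≤ (2 * n) ^ S * (2 * n * #B₂) := Nat.mul_le_mul_left _ hcard₂
        _ = (2 * n) ^ (S + 1) * #B₂ := by ring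

end Branching

def dyadicIndex (d k : ℕ) (x : EuclideanSpace ℝ (Fin d)) : Fin d → ℤ :=
  fun i => ⌊2 ^ k * x i⌋

section Dyadic

variable {d k : ℕ}

theorem mem_dyadicCube_iff {j : Fin d → ℤ} {x : EuclideanSpace ℝ (Fin d)} :
    x ∈ dyadicCube d k j ↔ dyadicIndex d k x = j := by
  simp [dyadicCube, funext_iff, dyadicIndex, Int.floor_eq_iff]

theorem dyadicIndex_apply_eq_ediv {k' : ℕ} (h : k ≤ k') (x : EuclideanSpace ℝ (Fin d))
    (i : Fin d) : dyadicIndex d k x i = dyadicIndex d k' x i / 2 ^ (k' - k) := by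
  have : (2 : ℝ) ^ k * x i = 2 ^ k' * x i / ((2 ^ (k' - k) : ℕ) : ℝ) := by
    rw [eq_div_iff (by positivity), Nat.cast_pow, Nat.cast_ofNat, mul_right_comm, ← pow_add,
      Nat.add_sub_cancel' h]
  rw [dyadicIndex, this, Int.floor_div_natCast]
  push_cast
  rfl

theorem dyadicIndex_eq_of_le {k' : ℕ} (h : k ≤ k') {x y : EuclideanSpace ℝ (Fin d)}
    (hxy : dyadicIndex d k' x = dyadicIndex d k' y) : dyadicIndex d k x = dyadicIndex d k y :=
  funext fun i => by rw [dyadicIndex_apply_eq_ediv h, dyadicIndex_apply_eq_ediv h y, hxy]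

theorem numChildren_dyadicIndex_le (L : ℕ) (B : Finset (EuclideanSpace ℝ (Fin d)))
    (j : Fin d → ℤ) : numChildren (dyadicIndex d k) (dyadicIndex d (k + L)) B j ≤ 2 ^ (L * d) := by
  have hsub : {x ∈ B | dyadicIndex d k x = j}.image (dyadicIndex d (k + L)) ⊆
      Fintype.piFinset fun i => Finset.Ico (2 ^ L * j i) (2 ^ L * j i + 2 ^ L) := by
    intro j' hj'
    obtain ⟨x, hx, rfl⟩ := Finset.mem_image.mp hj'
    rw [Fintype.mem_piFinset]
    intro i
    have hpos : (0 : ℤ) < 2 ^ L := by positivity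
    have hdiv := dyadicIndex_apply_eq_ediv (Nat.le_add_right k L) x i
    rw [(Finset.mem_filter.mp hx).2, Nat.add_sub_cancel_left] at hdiv
    rw [Finset.mem_Ico]
    constructor
    · have := (Int.le_ediv_iff_mul_le hpos).mp hdiv.le
      linarith
    · have := (Int.ediv_lt_iff_lt_mul hpos).mp (hdiv.symm ▸ lt_add_one (j i))
      rw [← hdiv] at this
      linarith
  calc _ ≤ _ := Finset.card_le_card hsub
    _ = 2 ^ (L * d) := by simp [Int.card_Ico, pow_mul, Int.toNat_pow_of_nonneg]

theorem covNum_inter_dyadicCube_eq_numChildren {k' : ℕ} (B : Finset (EuclideanSpace ℝ (Fin d)))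
    (j : Fin d → ℤ) :
    covNum d k' (↑B ∩ dyadicCube d k j) = numChildren (dyadicIndex d k) (dyadicIndex d k') B j := by
  have hidx : ∀ C : Set (EuclideanSpace ℝ (Fin d)), covIdx d k' C = dyadicIndex d k' '' C := by
    intro C
    ext j'
    simp [covIdx, Set.Nonempty, mem_dyadicCube_iff]
  rw [covNum, numChildren, hidx, ← Set.ncard_coe_finset, Finset.coe_image, Finset.coe_filter]
  congr 2
  ext x
  simp [mem_dyadicCube_iff]

theorem IsDyadicSet.finite {m : ℕ} {A : Set (EuclideanSpace ℝ (Fin d))} (hA : IsDyadicSet d m A) :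
    A.Finite := by
  refine ((Set.Finite.pi fun _ => Set.finite_Ico (0 : ℤ) (2 ^ m)).image
    fun n : Fin d → ℤ => WithLp.toLp 2 fun i => (n i : ℝ) / 2 ^ m).subset ?_
  intro x hx
  choose n hn using hA.2 x hx
  refine ⟨n, fun i _ => ?_, by ext i; simp [hn]⟩
  have h := hA.1 hx i
  rw [hn, le_div_iff₀ (by positivity), div_lt_iff₀ (by positivity), zero_mul, one_mul] at h
  beta_reduce at h ⊢
  exact Set.mem_Ico.mpr ⟨by exact_mod_cast h.1, by exact_mod_cast h.2⟩

end Dyadic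

theorem exists_uniform_subset_general (d L S : ℕ) (A : Set (EuclideanSpace ℝ (Fin d)))
    (hA : IsDyadicSet d (L * S) A) :
    ∃ A' ⊆ A, ∃ R : ℕ → ℕ, IsUniform d L S R A' ∧
      (A'.ncard : ℝ) ≥ ((2 * L * d : ℝ))⁻¹ ^ S * A.ncard := by
  obtain rfl | hS := S.eq_zero_or_pos
  · exact ⟨A, subset_rfl, 0, fun s hs => absurd hs s.not_lt_zero, by simp⟩
  obtain hLd | hLd := (L * d).eq_zero_or_pos
  · have h0 : (2 * L * d : ℝ) = 0 := by
      rw [mul_assoc]; exact_mod_cast mul_eq_zero_of_right 2 hLd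
    exact ⟨∅, empty_subset A, 0, fun s _ j hj => by simp [covIdx] at hj,
      by simp [h0, zero_pow hS.ne']⟩
  have hfin := hA.finite
  obtain ⟨B, hB, R, hR, hcard⟩ := exists_uniform_subset_of_refines
    (fun s => dyadicIndex d (s * L)) (fun s s' h _ _ => dyadicIndex_eq_of_le (by gcongr)) hLd S
    hfin.toFinset fun s _ j => by simpa [add_mul] using numChildren_dyadicIndex_le L _ j
  refine ⟨B, Set.Finite.subset_toFinset.mp hB, R, ?_, ?_⟩
  · rintro s hs _ ⟨x, hx, hxj⟩
    rw [covNum_inter_dyadicCube_eq_numChildren, ← mem_dyadicCube_iff.mp hxj]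
    exact hR s hs x hx
  · have hpos : (0 : ℝ) < 2 * L * d := by
      rw [mul_assoc]; exact mul_pos two_pos (by exact_mod_cast hLd)
    rw [Set.ncard_coe_finset, Set.ncard_eq_toFinset_card A hfin, ge_iff_le, inv_pow,
      inv_mul_le_iff₀ (pow_pos hpos S), mul_assoc]
    exact_mod_cast hcard

/-- **Uniformization lemma** (Bourgain; Keleti–Shmerkin): every nonempty
`2^{-LS}`-set `A` has an `(L,S)`-uniform subset `A'` with `|A'| ≥ (2Ld)^{-S} |A|`. -/
theorem exists_uniform_subset (d L S : ℕ) (A : Set (EuclideanSpace ℝ (Fin d)))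
    (hA : IsDyadicSet d (L * S) A) (hne : A.Nonempty) :
    ∃ A' ⊆ A, ∃ R : ℕ → ℕ, IsUniform d L S R A' ∧
      (A'.ncard : ℝ) ≥ ((2 * L * d : ℝ))⁻¹ ^ S * A.ncard :=
  exists_uniform_subset_general d L S A hA
end
end

section
/- Let μ, ν be finite Borel measures on [0,1]^d and m ∈ ℕ. Define the discretizations μ^{(m)}(x) = μ(x + 2^{-m}[-1/2,1/2)^d) for x ∈ 2^{-m}ℤ^d, and similarly ν^{(m)}. Then the additive energy at scale 2^{-m} satisfies E_{2^{-m}}(μ,ν) ≍_d ‖μ^{(m)} * ν^{(m)}‖₂², i.e. the two quantities agree up to multiplicative constants depending only on d. -/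
/-!
Round every point to the nearest point of the grid `2^{-k}ℤ^d` and let
`D_k(x₁, x₂, y₁, y₂) = [x₁] + [y₁] - [x₂] - [y₂] ∈ ℤ^d` be the resulting integer index.
The `μ² × ν²`-mass of the fibre `{D_k = t}` is `∑_z F(z + t) F(z)` with `F = μ^{(k)} * ν^{(k)}`,
so by Cauchy–Schwarz it is largest at `t = 0`, where it equals `‖μ^{(k)} * ν^{(k)}‖₂²`.
Since `D_k` differs from `2^k (x₁ + y₁ - x₂ - y₂)` by at most `2` in each coordinate, the energy
set at scale `2^{-m}` is covered by the `7^d` fibres `{D_m = t}` with `|t|_∞ ≤ 3`, while `{D_m = 0}`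
is covered by boundedly many fibres of `D_{m+d+1}`, whose zero fibre lies in the energy set.
-/

open Set Metric Pointwise

noncomputable section

open MeasureTheory

/-- The additive energy of measures `μ, ν` at scale `r`:
`E_r(μ,ν) = (μ²×ν²){(x₁,x₂,y₁,y₂) : |x₁+y₁−x₂−y₂| ≤ r}`. -/
def scaleEnergy (d : ℕ) (r : ℝ) (μ ν : Measure (EuclideanSpace ℝ (Fin d))) : ℝ :=
  (((μ.prod μ).prod (ν.prod ν))
    {p : (EuclideanSpace ℝ (Fin d) × EuclideanSpace ℝ (Fin d)) ×
      EuclideanSpace ℝ (Fin d) × EuclideanSpace ℝ (Fin d) |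
        ‖p.1.1 + p.2.1 - (p.1.2 + p.2.2)‖ ≤ r}).toReal

/-- The `2^{-m}`-discretization of `μ`, as a function on the grid `2^{-m}ℤ^d`:
`μ^{(m)}(j/2^m) = μ(j/2^m + 2^{-m}[-1/2,1/2)^d)`. -/
def discretization (d m : ℕ) (μ : Measure (EuclideanSpace ℝ (Fin d)))
    (j : Fin d → ℤ) : ℝ :=
  (μ {y | ∀ i, (j i : ℝ) - 1/2 ≤ 2 ^ m * y i ∧ 2 ^ m * y i < (j i : ℝ) + 1/2}).toReal

/-- The squared discrete `L²` norm of the convolution of two functions on `ℤ^d`: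
`‖f*g‖₂² = ∑_z (∑_x f(x) g(z−x))²`. -/
def convL2Sq (d : ℕ) (f g : (Fin d → ℤ) → ℝ) : ℝ :=
  ∑' z : Fin d → ℤ, (∑' x : Fin d → ℤ, f x * g (z - x)) ^ 2

open scoped ENNReal NNReal

theorem ENNReal.two_mul_mul_le_sq_add_sq (a b : ℝ≥0∞) : 2 * a * b ≤ a ^ 2 + b ^ 2 := by
  rcases eq_or_ne a ∞ with rfl | ha
  · rcases eq_or_ne b 0 with rfl | hb <;> simp [*]
  rcases eq_or_ne b ∞ with rfl | hb
  · rcases eq_or_ne a 0 with rfl | ha0 <;> simp [*]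
  lift a to ℝ≥0 using ha
  lift b to ℝ≥0 using hb
  exact_mod_cast two_mul_le_add_sq a b

theorem ENNReal.toReal_le_natCast_mul {a b : ℝ≥0∞} {n : ℕ} (hb : b ≠ ∞) (h : a ≤ n * b) :
    a.toReal ≤ n * b.toReal := by
  simpa using ENNReal.toReal_mono (by finiteness) h

section Quadruples

variable {X G : Type*}

def quadDiff [AddCommGroup X] (p : (X × X) × X × X) : X := p.1.1 + p.2.1 - (p.1.2 + p.2.2)

def quadMap (g : X → G) (p : (X × X) × X × X) : (G × G) × G × G :=
  ((g p.1.1, g p.1.2), (g p.2.1, g p.2.2))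

def energyIndex [AddCommGroup G] (g : X → G) (p : (X × X) × X × X) : G :=
  quadDiff (quadMap g p)

theorem Measurable.quadMap [MeasurableSpace X] [MeasurableSpace G] {g : X → G}
    (hg : Measurable g) : Measurable (quadMap g) :=
  ((hg.comp measurable_fst.fst).prodMk (hg.comp measurable_fst.snd)).prodMk
    ((hg.comp measurable_snd.fst).prodMk (hg.comp measurable_snd.snd))

theorem measure_quadMap_preimage_singleton [MeasurableSpace X] {g : X → G}
    (μ ν : Measure X) [SFinite μ] [SFinite ν] (v : (G × G) × G × G) :
    ((μ.prod μ).prod (ν.prod ν)) (quadMap g ⁻¹' {v}) =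
      μ (g ⁻¹' {v.1.1}) * μ (g ⁻¹' {v.1.2}) * (ν (g ⁻¹' {v.2.1}) * ν (g ⁻¹' {v.2.2})) := by
  have : quadMap g ⁻¹' {v} =
      ((g ⁻¹' {v.1.1}) ×ˢ (g ⁻¹' {v.1.2})) ×ˢ ((g ⁻¹' {v.2.1}) ×ˢ (g ⁻¹' {v.2.2})) := by
    ext p
    simp [quadMap, Prod.ext_iff, and_assoc]
  rw [this, Measure.prod_prod, Measure.prod_prod, Measure.prod_prod]

def cellConv [MeasurableSpace X] [AddCommGroup G] (g : X → G) (μ ν : Measure X) (z : G) :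
    ℝ≥0∞ :=
  ∑' j, μ (g ⁻¹' {j}) * ν (g ⁻¹' {z - j})

variable [MeasurableSpace X] [AddCommGroup G] [MeasurableSpace G] [MeasurableSingletonClass G]
  {g : X → G}

theorem measure_energyIndex_eq_tsum [Countable G] (hg : Measurable g) (μ ν : Measure X)
    [SFinite μ] [SFinite ν] (t : G) :
    ((μ.prod μ).prod (ν.prod ν)) {p | energyIndex g p = t} =
      ∑' z, cellConv g μ ν (z + t) * cellConv g μ ν z := by
  -- the quadruples of cells with `j₁ + k₁ - (j₂ + k₂) = t`, indexed by `z = j₂ + k₂` and `j₁, j₂`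
  let e : G × G × G → (G × G) × G × G := fun w =>
    ((w.2.1, w.2.2), (w.1 + t - w.2.1, w.1 - w.2.2))
  have he : Function.Injective e := by
    rintro ⟨z, j₁, j₂⟩ ⟨z', j₁', j₂'⟩ h
    simp only [e, Prod.mk.injEq] at h
    obtain ⟨⟨rfl, rfl⟩, -, h⟩ := h
    simp_all
  have hunion : {p | energyIndex g p = t} = ⋃ w, quadMap g ⁻¹' {e w} := by
    ext p
    simp only [energyIndex, quadDiff, mem_ofPred_eq, mem_iUnion, mem_preimage, mem_singleton_iff]
    constructor
    · rintro rfl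
      refine ⟨((quadMap g p).1.2 + (quadMap g p).2.2, (quadMap g p).1.1, (quadMap g p).1.2), ?_⟩
      simp only [e, quadMap, Prod.mk.injEq]
      exact ⟨trivial, by abel, by abel⟩
    · rintro ⟨w, hw⟩
      rw [hw]
      simp only [e]
      abel
  rw [hunion, measure_iUnion (fun w w' hne => Disjoint.preimage _ (by simpa using he.ne hne))
    (fun w => hg.quadMap (measurableSet_singleton _))]
  simp only [measure_quadMap_preimage_singleton, e, ENNReal.tsum_prod', cellConv]
  refine tsum_congr fun z => ?_
  rw [← ENNReal.tsum_mul_right]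
  refine tsum_congr fun j₁ => ?_
  rw [← ENNReal.tsum_mul_left]
  refine tsum_congr fun j₂ => ?_
  ring

theorem measure_energyIndex_le_measure_energyIndex_eq_zero [Countable G] (hg : Measurable g)
    (μ ν : Measure X) [SFinite μ] [SFinite ν] (t : G) :
    ((μ.prod μ).prod (ν.prod ν)) {p | energyIndex g p = t} ≤
      ((μ.prod μ).prod (ν.prod ν)) {p | energyIndex g p = 0} := by
  rw [measure_energyIndex_eq_tsum hg, measure_energyIndex_eq_tsum hg]
  set F := cellConv g μ ν
  have hshift : ∑' z, F (z + t) ^ 2 = ∑' z, F z ^ 2 := (Equiv.addRight t).tsum_eq (F · ^ 2)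
  refine (ENNReal.mul_le_mul_iff_right two_ne_zero ENNReal.ofNat_ne_top).1 ?_
  calc 2 * ∑' z, F (z + t) * F z
      = ∑' z, 2 * F (z + t) * F z := by simp only [mul_assoc, ENNReal.tsum_mul_left]
    _ ≤ ∑' z, (F (z + t) ^ 2 + F z ^ 2) :=
        ENNReal.tsum_le_tsum fun z => ENNReal.two_mul_mul_le_sq_add_sq _ _
    _ = 2 * ∑' z, F (z + 0) * F z := by
        rw [ENNReal.tsum_add, hshift, ← two_mul]
        simp only [add_zero, sq]

theorem measure_le_card_mul_measure_energyIndex_eq_zero [Countable G] (hg : Measurable g)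
    (μ ν : Measure X) [SFinite μ] [SFinite ν] {S : Set ((X × X) × X × X)} {T : Finset G}
    (hS : ∀ p ∈ S, energyIndex g p ∈ T) :
    ((μ.prod μ).prod (ν.prod ν)) S ≤
      T.card * ((μ.prod μ).prod (ν.prod ν)) {p | energyIndex g p = 0} :=
  calc ((μ.prod μ).prod (ν.prod ν)) S
      ≤ ((μ.prod μ).prod (ν.prod ν)) (⋃ t ∈ T, {p | energyIndex g p = t}) :=
        measure_mono fun p hp => mem_biUnion (hS p hp) rfl
    _ ≤ ∑ t ∈ T, ((μ.prod μ).prod (ν.prod ν)) {p | energyIndex g p = t} :=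
        measure_biUnion_finset_le _ _
    _ ≤ ∑ _t ∈ T, ((μ.prod μ).prod (ν.prod ν)) {p | energyIndex g p = 0} :=
        Finset.sum_le_sum fun t _ => measure_energyIndex_le_measure_energyIndex_eq_zero hg μ ν t
    _ = T.card * ((μ.prod μ).prod (ν.prod ν)) {p | energyIndex g p = 0} := by
        rw [Finset.sum_const, nsmul_eq_mul]

theorem cellConv_le (hg : Measurable g) (μ ν : Measure X) (z : G) :
    cellConv g μ ν z ≤ μ univ * ν univ :=
  calc cellConv g μ ν z ≤ ∑' j, μ (g ⁻¹' {j}) * ν univ :=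
        ENNReal.tsum_le_tsum fun j => mul_le_mul_right (measure_mono (subset_univ _)) _
    _ ≤ μ univ * ν univ := by
        rw [ENNReal.tsum_mul_right]
        gcongr
        exact (tsum_meas_le_meas_iUnion_of_disjoint μ (fun j => hg (measurableSet_singleton j))
          (pairwise_disjoint_fiber g)).trans (measure_mono (subset_univ _))

end Quadruples

theorem convL2Sq_eq_measure_energyIndex_eq_zero {X : Type*} [MeasurableSpace X] {d : ℕ}
    {g : X → Fin d → ℤ} (hg : Measurable g) (μ ν : Measure X) [IsFiniteMeasure μ]
    [IsFiniteMeasure ν] :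
    convL2Sq d (fun j => (μ (g ⁻¹' {j})).toReal) (fun j => (ν (g ⁻¹' {j})).toReal) =
      (((μ.prod μ).prod (ν.prod ν)) {p | energyIndex g p = 0}).toReal := by
  have hfin : ∀ z, cellConv g μ ν z ≠ ∞ := fun z =>
    ne_top_of_le_ne_top (by finiteness) (cellConv_le hg μ ν z)
  have hconv : ∀ z, ∑' j, (μ (g ⁻¹' {j})).toReal * (ν (g ⁻¹' {z - j})).toReal =
      (cellConv g μ ν z).toReal := fun z => by
    rw [cellConv, ENNReal.tsum_toReal_eq (fun j => by finiteness)]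
    simp only [ENNReal.toReal_mul]
  rw [measure_energyIndex_eq_tsum hg,
    ENNReal.tsum_toReal_eq (fun z => ENNReal.mul_ne_top (hfin _) (hfin _)), convL2Sq]
  simp only [hconv, add_zero, sq, ENNReal.toReal_mul]

theorem EuclideanSpace.norm_le_sqrt_card_mul {ι : Type*} [Fintype ι] {x : EuclideanSpace ℝ ι}
    {c : ℝ} (hc : 0 ≤ c) (hx : ∀ i, |x i| ≤ c) : ‖x‖ ≤ √(Fintype.card ι) * c := by
  rw [EuclideanSpace.norm_eq, ← Real.sqrt_sq hc, ← Real.sqrt_mul (Nat.cast_nonneg _)]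
  refine Real.sqrt_le_sqrt ?_
  calc ∑ i, ‖x i‖ ^ 2 ≤ ∑ _i : ι, c ^ 2 :=
        Finset.sum_le_sum fun i _ => pow_le_pow_left₀ (norm_nonneg _) (hx i) 2
    _ = Fintype.card ι * c ^ 2 := by simp

theorem Real.sqrt_natCast_le_two_pow (d : ℕ) : √(d : ℝ) ≤ 2 ^ d := by
  rw [Real.sqrt_le_left (by positivity), ← pow_mul]
  calc (d : ℝ) ≤ 2 ^ d := by exact_mod_cast Nat.lt_two_pow_self.le
    _ ≤ 2 ^ (d * 2) := pow_le_pow_right₀ one_le_two (by omega)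

def intBox (d R : ℕ) : Finset (Fin d → ℤ) := Fintype.piFinset fun _ => Finset.Icc (-R : ℤ) R

theorem mem_intBox {d R : ℕ} {v : Fin d → ℤ} : v ∈ intBox d R ↔ ∀ i, |v i| ≤ R := by
  simp [intBox, abs_le]

theorem card_intBox (d R : ℕ) : (intBox d R).card = (2 * R + 1) ^ d := by
  simp only [intBox, Fintype.card_piFinset, Int.card_Icc, Finset.prod_const, Finset.card_univ,
    Fintype.card_fin]
  congr 1
  omega

section Euclidean

variable {d : ℕ}

theorem scaleEnergy_eq (r : ℝ) (μ ν : Measure (EuclideanSpace ℝ (Fin d))) :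
    scaleEnergy d r μ ν = (((μ.prod μ).prod (ν.prod ν)) {p | ‖quadDiff p‖ ≤ r}).toReal :=
  rfl

def roundIdx (k : ℕ) (x : EuclideanSpace ℝ (Fin d)) : Fin d → ℤ := fun i => round (2 ^ k * x i)

theorem measurable_roundIdx (k : ℕ) : Measurable (roundIdx (d := d) k) := by
  refine measurable_pi_lambda _ fun i => ?_
  simp only [roundIdx, round_eq]
  fun_prop

theorem discretization_eq (m : ℕ) (μ : Measure (EuclideanSpace ℝ (Fin d))) :
    discretization d m μ = fun j => (μ (roundIdx m ⁻¹' {j})).toReal := by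
  funext j
  rw [discretization]
  congr 2
  ext y
  simp [roundIdx, funext_iff, round_eq_iff]

theorem abs_energyIndex_roundIdx_sub_le (k : ℕ)
    (p : (EuclideanSpace ℝ (Fin d) × EuclideanSpace ℝ (Fin d)) ×
      EuclideanSpace ℝ (Fin d) × EuclideanSpace ℝ (Fin d)) (i : Fin d) :
    |(energyIndex (roundIdx k) p i : ℝ) - 2 ^ k * quadDiff p i| ≤ 2 := by
  have h₁ := abs_sub_round (2 ^ k * p.1.1 i)
  have h₂ := abs_sub_round (2 ^ k * p.1.2 i)
  have h₃ := abs_sub_round (2 ^ k * p.2.1 i)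
  have h₄ := abs_sub_round (2 ^ k * p.2.2 i)
  simp only [energyIndex, quadDiff, quadMap, roundIdx, Pi.add_apply, Pi.sub_apply,
    PiLp.add_apply, PiLp.sub_apply]
  push_cast
  rw [abs_le] at *
  constructor <;> linarith

variable {p : (EuclideanSpace ℝ (Fin d) × EuclideanSpace ℝ (Fin d)) ×
  EuclideanSpace ℝ (Fin d) × EuclideanSpace ℝ (Fin d)}

theorem energyIndex_roundIdx_mem_intBox {k r : ℕ} (h : ∀ i, |2 ^ k * quadDiff p i| ≤ r) :
    energyIndex (roundIdx k) p ∈ intBox d (r + 2) := by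
  refine mem_intBox.2 fun i => ?_
  have hi := abs_energyIndex_roundIdx_sub_le k p i
  have hr := abs_le.1 (h i)
  have : |(energyIndex (roundIdx k) p i : ℝ)| ≤ r + 2 := by
    rw [abs_le] at hi ⊢
    constructor <;> linarith
  exact_mod_cast this

theorem abs_two_pow_mul_quadDiff_le_of_energyIndex_eq_zero {k : ℕ}
    (h : energyIndex (roundIdx k) p = 0) (i : Fin d) : |2 ^ k * quadDiff p i| ≤ 2 := by
  simpa [h] using abs_energyIndex_roundIdx_sub_le k p i

theorem norm_quadDiff_le_of_energyIndex_eq_zero {m : ℕ}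
    (h : energyIndex (roundIdx (m + d + 1)) p = 0) : ‖quadDiff p‖ ≤ (2 ^ m)⁻¹ := by
  have hi (i : Fin d) : |quadDiff p i| ≤ (2 ^ m)⁻¹ / 2 ^ d := by
    have := abs_two_pow_mul_quadDiff_le_of_energyIndex_eq_zero h i
    rw [abs_mul, abs_of_pos (by positivity)] at this
    rw [le_div_iff₀ (by positivity)]
    calc |quadDiff p i| * 2 ^ d = 2 ^ (m + d + 1) * |quadDiff p i| * ((2 ^ m)⁻¹ / 2) := by
          field_simp; ring
      _ ≤ 2 * ((2 ^ m)⁻¹ / 2) := by gcongr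
      _ = (2 ^ m)⁻¹ := by ring
  calc ‖quadDiff p‖ ≤ √(Fintype.card (Fin d)) * ((2 ^ m)⁻¹ / 2 ^ d) :=
        EuclideanSpace.norm_le_sqrt_card_mul (by positivity) hi
    _ ≤ 2 ^ d * ((2 ^ m)⁻¹ / 2 ^ d) := by
        rw [Fintype.card_fin]
        gcongr
        exact Real.sqrt_natCast_le_two_pow d
    _ = (2 ^ m)⁻¹ := by field_simp

variable (m : ℕ) (μ ν : Measure (EuclideanSpace ℝ (Fin d))) [SFinite μ] [SFinite ν]

theorem measure_norm_quadDiff_le_inv_two_pow_le :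
    ((μ.prod μ).prod (ν.prod ν)) {p | ‖quadDiff p‖ ≤ (2 ^ m)⁻¹} ≤
      (7 ^ d : ℕ) * ((μ.prod μ).prod (ν.prod ν)) {p | energyIndex (roundIdx m) p = 0} := by
  have hS (p) (hp : ‖quadDiff p‖ ≤ (2 ^ m)⁻¹) :
      energyIndex (roundIdx m) p ∈ intBox d (1 + 2) := by
    refine energyIndex_roundIdx_mem_intBox fun i => ?_
    rw [abs_mul, abs_of_pos (by positivity), Nat.cast_one]
    calc 2 ^ m * |quadDiff p i| ≤ 2 ^ m * (2 ^ m)⁻¹ := by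
          gcongr
          exact (PiLp.norm_apply_le _ i).trans hp
      _ = 1 := by field_simp
  calc ((μ.prod μ).prod (ν.prod ν)) {p | ‖quadDiff p‖ ≤ (2 ^ m)⁻¹}
      ≤ (intBox d (1 + 2)).card *
          ((μ.prod μ).prod (ν.prod ν)) {p | energyIndex (roundIdx m) p = 0} :=
        measure_le_card_mul_measure_energyIndex_eq_zero (measurable_roundIdx m) μ ν hS
    _ = (7 ^ d : ℕ) * ((μ.prod μ).prod (ν.prod ν)) {p | energyIndex (roundIdx m) p = 0} := by
        rw [card_intBox]

theorem measure_energyIndex_roundIdx_eq_zero_le :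
    ((μ.prod μ).prod (ν.prod ν)) {p | energyIndex (roundIdx m) p = 0} ≤
      ((2 ^ (d + 3) + 5) ^ d : ℕ) *
        ((μ.prod μ).prod (ν.prod ν)) {p | ‖quadDiff p‖ ≤ (2 ^ m)⁻¹} := by
  -- at the finer scale `2^{-(m+d+1)}` a vanishing index forces `‖quadDiff p‖ ≤ 2^{-m}`
  have hS (p) (hp : energyIndex (roundIdx m) p = 0) :
      energyIndex (roundIdx (m + d + 1)) p ∈ intBox d (2 ^ (d + 2) + 2) := by
    refine energyIndex_roundIdx_mem_intBox fun i => ?_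
    have := abs_two_pow_mul_quadDiff_le_of_energyIndex_eq_zero hp i
    calc |2 ^ (m + d + 1) * quadDiff p i| = 2 ^ (d + 1) * |2 ^ m * quadDiff p i| := by
          simp only [abs_mul, abs_pow, abs_two]
          ring
      _ ≤ 2 ^ (d + 1) * 2 := by gcongr
      _ = ((2 ^ (d + 2) : ℕ) : ℝ) := by push_cast; ring
  calc ((μ.prod μ).prod (ν.prod ν)) {p | energyIndex (roundIdx m) p = 0}
      ≤ (intBox d (2 ^ (d + 2) + 2)).card *
          ((μ.prod μ).prod (ν.prod ν)) {p | energyIndex (roundIdx (m + d + 1)) p = 0} :=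
        measure_le_card_mul_measure_energyIndex_eq_zero (measurable_roundIdx _) μ ν hS
    _ ≤ ((2 ^ (d + 3) + 5) ^ d : ℕ) *
          ((μ.prod μ).prod (ν.prod ν)) {p | ‖quadDiff p‖ ≤ (2 ^ m)⁻¹} := by
        rw [card_intBox, show 2 * (2 ^ (d + 2) + 2) + 1 = 2 ^ (d + 3) + 5 by ring]
        gcongr
        exact norm_quadDiff_le_of_energyIndex_eq_zero

end Euclidean

/-- **Additive energy at scale `2^{-m}` is comparable to the `L²` norm of the convolution
of the discretizations**, up to multiplicative constants depending only on `d`. -/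
theorem scaleEnergy_comparable_convL2Sq (d : ℕ) :
    ∃ c > (0 : ℝ), ∃ C > (0 : ℝ), ∀ (m : ℕ) (μ ν : Measure (EuclideanSpace ℝ (Fin d))),
      IsFiniteMeasure μ → IsFiniteMeasure ν →
      μ {x | ∀ i, 0 ≤ x i ∧ x i ≤ 1}ᶜ = 0 → ν {x | ∀ i, 0 ≤ x i ∧ x i ≤ 1}ᶜ = 0 →
      c * convL2Sq d (discretization d m μ) (discretization d m ν) ≤
          scaleEnergy d (((2 : ℝ) ^ m)⁻¹) μ ν ∧
        scaleEnergy d (((2 : ℝ) ^ m)⁻¹) μ ν ≤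
          C * convL2Sq d (discretization d m μ) (discretization d m ν) := by
  refine ⟨((2 ^ (d + 3) + 5) ^ d)⁻¹, by positivity, 7 ^ d, by positivity, ?_⟩
  intro m μ ν _ _ _ _
  rw [discretization_eq, discretization_eq,
    convL2Sq_eq_measure_energyIndex_eq_zero (measurable_roundIdx m), scaleEnergy_eq]
  constructor
  · rw [inv_mul_le_iff₀ (by positivity)]
    exact_mod_cast ENNReal.toReal_le_natCast_mul (by finiteness)
      (measure_energyIndex_roundIdx_eq_zero_le m μ ν)
  · exact_mod_cast ENNReal.toReal_le_natCast_mul (by finiteness)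
      (measure_norm_quadDiff_le_inv_two_pow_le m μ ν)
end
end
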